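/- Under the gauge conditions (M^L(δG_k))ᵀ M^L(U_k) = 0 for k = 1,…,d−1, left-orthogonality of U_k and right-orthogonality of V_k, the inner product of two tangent vectors v^(α), v^(β) parametrized by cores δG_k^(α) and δG_k^(β) equals the sum over k of the Frobenius inner products ⟨δG_k^(α), δG_k^(β)⟩_F. -/

import Mathlib

/-!
Both sides are bilinear, so it suffices to pair the `k`-th summand of `v^(α)` with the `l`-th
summand of `v^(β)`. The inner product of two tensor trains is read off the transfer matrices
`L_{m+1} = Σ_x A_m(x)ᵀ L_m B_m(x)`. Left-orthogonality keeps `L_m = I` up to `min k l`. If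
`k ≠ l`, the gauge condition makes the next transfer matrix `Σ_x δG(x)ᵀ U(x) = 0`, and zero
propagates. If `k = l`, the next one is `Σ_x δG^(α)(x)ᵀ δG^(β)(x)`, whose trace is the Frobenius
product, and right-orthogonality of the remaining cores preserves the trace; since `r_d = 1`, the
final inner product is that trace.
-/

/-- Entry of a tensor given by a TT representation with rank function `r`
(boundary ranks `1`). -/
noncomputable def ttEntry {d n : ℕ} (r : Fin (d + 1) → ℕ)
    (G : ∀ k : Fin d, Fin n → Matrix (Fin (r k.castSucc)) (Fin (r k.succ)) ℝ)
    (x : Fin d → Fin n) : ℝ :=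
  ∑ α : (∀ k : Fin (d + 1), Fin (r k)),
    ∏ k : Fin d, G k (x k) (α k.castSucc) (α k.succ)

/-- Tangent vector parametrized by correction cores `δG`:
`Ξ = Σ_k U₁⋯U_{k−1} δG_k V_{k+1}⋯V_d`. -/
noncomputable def tangentVec {d n : ℕ} (r : Fin (d + 1) → ℕ)
    (U V δG : ∀ k : Fin d, Fin n → Matrix (Fin (r k.castSucc)) (Fin (r k.succ)) ℝ) :
    (Fin d → Fin n) → ℝ :=
  fun i => ∑ k : Fin d,
    ttEntry r (fun l x => if l < k then U l x else if l = k then δG l x else V l x) i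

open Finset Matrix

theorem Fin.le_induction {d : ℕ} {m₀ : Fin (d + 1)} {P : Fin (d + 1) → Prop} (base : P m₀)
    (step : ∀ k : Fin d, m₀ ≤ k.castSucc → P k.castSucc → P k.succ) {m : Fin (d + 1)}
    (hm : m₀ ≤ m) : P m := by
  induction m using Fin.induction with
  | zero => rwa [nonpos_iff_eq_zero.mp hm] at base
  | succ k ih =>
    rcases hm.eq_or_lt with rfl | hlt
    · exact base
    · have hk := Fin.le_castSucc_iff.mpr hlt
      exact step k hk (ih hk)

theorem sum_path_prod_mul_eq {d : ℕ} (σ : Fin (d + 1) → Type*) [∀ k, Fintype (σ k)]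
    (C : ∀ k : Fin d, σ k.castSucc → σ k.succ → ℝ) (L : ∀ m : Fin (d + 1), σ m → ℝ)
    (h0 : ∀ p, L 0 p = 1) (hstep : ∀ k q, L k.succ q = ∑ p, L k.castSucc p * C k p q)
    (w : σ (Fin.last d) → ℝ) :
    ∑ α : ∀ k, σ k, (∏ k, C k (α k.castSucc) (α k.succ)) * w (α (Fin.last d)) =
      ∑ q, L (Fin.last d) q * w q := by
  induction d with
  | zero =>
    rw [← (Fin.snocEquiv σ).sum_comp, Fintype.sum_prod_type]
    simp only [Fin.snocEquiv_apply, Fin.snoc_last, Fin.prod_univ_zero, one_mul, Fintype.sum_unique]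
    exact sum_congr rfl fun q _ => by rw [show L (Fin.last 0) q = 1 from h0 q, one_mul]
  | succ d ih =>
    rw [← (Fin.snocEquiv σ).sum_comp, Fintype.sum_prod_type]
    refine sum_congr rfl fun q _ => ?_
    have hsucc (β : ∀ i : Fin (d + 1), σ i.castSucc) (i : Fin d) :
        (Fin.snoc β q i.castSucc.succ : σ i.castSucc.succ) = β i.succ :=
      Fin.snoc_castSucc (p := β) (x := q) (i := i.succ)
    have hlast (β : ∀ i : Fin (d + 1), σ i.castSucc) :
        (Fin.snoc β q (Fin.last d).succ : σ (Fin.last d).succ) = q :=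
      Fin.snoc_last (p := β) (x := q)
    simp only [Fin.snocEquiv_apply, Fin.prod_univ_castSucc, Fin.snoc_castSucc, Fin.snoc_last,
      hsucc, hlast, mul_assoc]
    refine (ih (fun i => σ i.castSucc) (fun k => C k.castSucc) (fun m => L m.castSucc) h0
      (fun k => hstep k.castSucc) (fun p => C (Fin.last d) p q * w q)).trans ?_
    rw [show L (Fin.last (d + 1)) q = L (Fin.last d).succ q from rfl, hstep, sum_mul]
    exact sum_congr rfl fun p _ => (mul_assoc _ _ _).symm

section MatrixSums

variable {X ι κ : Type*} [Fintype X]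

theorem sum_transpose_mul_apply [Fintype ι] (A B : X → Matrix ι κ ℝ) (j j' : κ) :
    (∑ x, (A x)ᵀ * B x) j j' = ∑ p, ∑ x, A x p j * B x p j' := by
  simp only [Matrix.sum_apply, Matrix.mul_apply, Matrix.transpose_apply]
  exact sum_comm

theorem sum_mul_transpose_apply [Fintype κ] (A B : X → Matrix ι κ ℝ) (p p' : ι) :
    (∑ x, A x * (B x)ᵀ) p p' = ∑ x, ∑ q, A x p q * B x p' q := by
  simp only [Matrix.sum_apply, Matrix.mul_apply, Matrix.transpose_apply]

theorem trace_sum_transpose_mul [Fintype ι] [Fintype κ] (A B : X → Matrix ι κ ℝ) :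
    trace (∑ x, (A x)ᵀ * B x) = ∑ x, ∑ p, ∑ q, A x p q * B x p q := by
  simp only [Matrix.trace, Matrix.diag, sum_transpose_mul_apply]
  rw [sum_comm_cycle]
  exact sum_congr rfl fun _ _ => sum_comm

theorem trace_sum_transpose_mul_mul [Fintype ι] [Fintype κ] [DecidableEq ι]
    (V : X → Matrix ι κ ℝ) (hV : ∑ x, V x * (V x)ᵀ = 1) (L : Matrix ι ι ℝ) :
    trace (∑ x, (V x)ᵀ * L * V x) = trace L := by
  calc trace (∑ x, (V x)ᵀ * L * V x)
      = ∑ x, trace (V x * (V x)ᵀ * L) := by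
        rw [trace_sum]
        exact sum_congr rfl fun x _ => by rw [trace_mul_comm, Matrix.mul_assoc]
    _ = trace L := by rw [← trace_sum, ← Finset.sum_mul, hV, Matrix.one_mul]

theorem sum_sum_apply_eq_trace [Fintype ι] [Subsingleton ι] (M : Matrix ι ι ℝ) :
    ∑ p, ∑ q, M p q = trace M :=
  sum_congr rfl fun p _ => Fintype.sum_subsingleton _ p

end MatrixSums

abbrev TTCores {d : ℕ} (n : ℕ) (r : Fin (d + 1) → ℕ) : Type :=
  ∀ k : Fin d, Fin n → Matrix (Fin (r k.castSucc)) (Fin (r k.succ)) ℝ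

section TensorTrain

variable {d n : ℕ} {r : Fin (d + 1) → ℕ}

/-- `transferState A B m = Σ_{i₁…iₘ} (A₁(i₁)⋯Aₘ(iₘ))ᵀ J (B₁(i₁)⋯Bₘ(iₘ))` with `J` the all-ones
matrix, which accounts for `ttEntry` summing over the boundary index as well. -/
noncomputable def transferState (A B : TTCores n r) :
    ∀ m : Fin (d + 1), Matrix (Fin (r m)) (Fin (r m)) ℝ :=
  Fin.induction (Matrix.of fun _ _ => 1) fun k L => ∑ x, (A k x)ᵀ * L * B k x

theorem transferState_zero (A B : TTCores n r) : transferState A B 0 = Matrix.of fun _ _ => 1 :=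
  rfl

theorem transferState_succ (A B : TTCores n r) (k : Fin d) :
    transferState A B k.succ = ∑ x, (A k x)ᵀ * transferState A B k.castSucc * B k x :=
  Fin.induction_succ _ _ k

theorem sum_ttEntry_mul_ttEntry (A B : TTCores n r) :
    ∑ i, ttEntry r A i * ttEntry r B i = ∑ p, ∑ q, transferState A B (Fin.last d) p q := by
  let C (k : Fin d) (p : Fin (r k.castSucc) × Fin (r k.castSucc))
      (q : Fin (r k.succ) × Fin (r k.succ)) : ℝ :=
    ∑ x, A k x p.1 q.1 * B k x p.2 q.2
  calc ∑ i, ttEntry r A i * ttEntry r B i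
      = ∑ γ : ∀ k, Fin (r k) × Fin (r k), (∏ k, C k (γ k.castSucc) (γ k.succ)) * 1 := by
        rw [← (Equiv.arrowProdEquivProdArrow _ _ _).symm.sum_comp, Fintype.sum_prod_type]
        simp only [C, mul_one, Fintype.prod_sum, Equiv.arrowProdEquivProdArrow_symm_apply, ttEntry,
          sum_mul_sum, prod_mul_distrib]
        rw [sum_comm]
        exact sum_congr rfl fun _ _ => sum_comm
    _ = ∑ pq : Fin (r (Fin.last d)) × Fin (r (Fin.last d)),
          transferState A B (Fin.last d) pq.1 pq.2 * 1 :=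
        sum_path_prod_mul_eq (fun k => Fin (r k) × Fin (r k)) C
          (fun m pq => transferState A B m pq.1 pq.2) (fun _ => rfl) ?_ (fun _ => 1)
    _ = ∑ p, ∑ q, transferState A B (Fin.last d) p q := by
        simp only [mul_one, Fintype.sum_prod_type]
  intro k q
  simp only [C, transferState_succ, Matrix.sum_apply, Matrix.mul_apply, Matrix.transpose_apply,
    Fintype.sum_prod_type, sum_mul, mul_sum]
  rw [sum_comm]
  conv_rhs => rw [sum_comm]
  refine sum_congr rfl fun _ _ => ?_
  rw [sum_comm]
  exact sum_congr rfl fun _ _ => sum_congr rfl fun _ _ => by ring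

section TransferState

variable (A B : TTCores n r)

theorem transferState_eq_one (hr0 : r 0 = 1) {m : Fin (d + 1)}
    (h : ∀ k : Fin d, k.castSucc < m → ∑ x, (A k x)ᵀ * B k x = 1) :
    transferState A B m = 1 := by
  induction m using Fin.induction with
  | zero =>
    have : Subsingleton (Fin (r 0)) := Fin.subsingleton_iff_le_one.mpr hr0.le
    ext p q
    rw [Subsingleton.elim p q, transferState_zero, Matrix.of_apply, Matrix.one_apply_eq]
  | succ k ih =>
    rw [transferState_succ, ih fun j hj => h j (hj.trans Fin.castSucc_lt_succ)]
    simpa only [Matrix.mul_one] using h k Fin.castSucc_lt_succ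

theorem transferState_eq_zero_of_le {m₀ m : Fin (d + 1)} (hm : m₀ ≤ m)
    (h₀ : transferState A B m₀ = 0) : transferState A B m = 0 := by
  refine Fin.le_induction (P := fun m => transferState A B m = 0) h₀ (fun k _ hk => ?_) hm
  simp only [transferState_succ, hk, Matrix.mul_zero, Matrix.zero_mul, sum_const_zero]

theorem trace_transferState_of_le {m₀ m : Fin (d + 1)} (hm : m₀ ≤ m)
    (h : ∀ k : Fin d, m₀ ≤ k.castSucc → A k = B k ∧ ∑ x, A k x * (A k x)ᵀ = 1) :
    trace (transferState A B m) = trace (transferState A B m₀) := by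
  refine Fin.le_induction (P := fun m => trace (transferState A B m) = _) rfl
    (fun k hk ih => ?_) hm
  obtain ⟨hAB, hA⟩ := h k hk
  rw [transferState_succ, ← hAB, trace_sum_transpose_mul_mul _ hA, ih]

end TransferState

section TangentTerms

variable (U V : TTCores n r)

def tangentTermCores (δG : TTCores n r) (k : Fin d) : TTCores n r :=
  fun l x => if l < k then U l x else if l = k then δG l x else V l x

variable {U V}

theorem tangentTermCores_of_lt (δG : TTCores n r) {k l : Fin d} (h : l < k) :
    tangentTermCores U V δG k l = U l := by
  funext x
  simp [tangentTermCores, h]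

theorem tangentTermCores_self (δG : TTCores n r) (k : Fin d) :
    tangentTermCores U V δG k k = δG k := by
  funext x
  simp [tangentTermCores]

theorem tangentTermCores_of_gt (δG : TTCores n r) {k l : Fin d} (h : k < l) :
    tangentTermCores U V δG k l = V l := by
  funext x
  simp [tangentTermCores, h.not_gt, h.ne']

theorem transferState_tangentTermCores_eq_one (hr0 : r 0 = 1)
    (hU : ∀ k : Fin d, (k : ℕ) + 1 < d → ∑ x, (U k x)ᵀ * U k x = 1)
    (δG δG' : TTCores n r) {k l m : Fin d} (hk : m ≤ k) (hl : m ≤ l) :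
    transferState (tangentTermCores U V δG k) (tangentTermCores U V δG' l) m.castSucc = 1 := by
  refine transferState_eq_one _ _ hr0 fun j hj => ?_
  rw [Fin.castSucc_lt_castSucc_iff] at hj
  rw [tangentTermCores_of_lt _ (hj.trans_le hk), tangentTermCores_of_lt _ (hj.trans_le hl)]
  exact hU j (by omega)

theorem sum_ttEntry_tangentTerm_mul_of_lt (hr0 : r 0 = 1)
    (hU : ∀ k : Fin d, (k : ℕ) + 1 < d → ∑ x, (U k x)ᵀ * U k x = 1)
    (δG δG' : TTCores n r) (hG : ∀ k : Fin d, (k : ℕ) + 1 < d → ∑ x, (δG k x)ᵀ * U k x = 0)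
    {k l : Fin d} (hkl : k < l) :
    ∑ i, ttEntry r (tangentTermCores U V δG k) i * ttEntry r (tangentTermCores U V δG' l) i
      = 0 := by
  have hzero :
      transferState (tangentTermCores U V δG k) (tangentTermCores U V δG' l) k.succ = 0 := by
    rw [transferState_succ, transferState_tangentTermCores_eq_one hr0 hU δG δG' le_rfl hkl.le]
    simp only [Matrix.mul_one, tangentTermCores_self, tangentTermCores_of_lt _ hkl]
    exact hG k (by omega)
  rw [sum_ttEntry_mul_ttEntry, transferState_eq_zero_of_le _ _ (Fin.le_last _) hzero]
  simp only [Matrix.zero_apply, sum_const_zero]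

theorem sum_ttEntry_tangentTerm_mul_self (hr0 : r 0 = 1) (hrd : r (Fin.last d) = 1)
    (hU : ∀ k : Fin d, (k : ℕ) + 1 < d → ∑ x, (U k x)ᵀ * U k x = 1)
    (hV : ∀ k : Fin d, 0 < (k : ℕ) → ∑ x, V k x * (V k x)ᵀ = 1)
    (δG δG' : TTCores n r) (k : Fin d) :
    ∑ i, ttEntry r (tangentTermCores U V δG k) i * ttEntry r (tangentTermCores U V δG' k) i
      = ∑ x, ∑ p, ∑ q, δG k x p q * δG' k x p q := by
  have : Subsingleton (Fin (r (Fin.last d))) := Fin.subsingleton_iff_le_one.mpr hrd.le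
  rw [sum_ttEntry_mul_ttEntry, sum_sum_apply_eq_trace,
    trace_transferState_of_le _ _ (Fin.le_last k.succ), transferState_succ,
    transferState_tangentTermCores_eq_one hr0 hU δG δG' le_rfl le_rfl]
  · simp only [Matrix.mul_one, tangentTermCores_self, trace_sum_transpose_mul]
  · intro j hj
    have hkj : k < j := Fin.succ_lt_succ_iff.mp (Fin.le_castSucc_iff.mp hj)
    rw [tangentTermCores_of_gt _ hkj, tangentTermCores_of_gt _ hkj]
    exact ⟨rfl, hV j (by omega)⟩

theorem sum_ttEntry_tangentTerm_mul (hr0 : r 0 = 1) (hrd : r (Fin.last d) = 1)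
    (hU : ∀ k : Fin d, (k : ℕ) + 1 < d → ∑ x, (U k x)ᵀ * U k x = 1)
    (hV : ∀ k : Fin d, 0 < (k : ℕ) → ∑ x, V k x * (V k x)ᵀ = 1)
    (δG δG' : TTCores n r)
    (hG : ∀ k : Fin d, (k : ℕ) + 1 < d → ∑ x, (δG k x)ᵀ * U k x = 0)
    (hG' : ∀ k : Fin d, (k : ℕ) + 1 < d → ∑ x, (δG' k x)ᵀ * U k x = 0) (k l : Fin d) :
    ∑ i, ttEntry r (tangentTermCores U V δG k) i * ttEntry r (tangentTermCores U V δG' l) i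
      = if k = l then ∑ x, ∑ p, ∑ q, δG k x p q * δG' k x p q else 0 := by
  rcases lt_trichotomy k l with hkl | rfl | hlk
  · rw [if_neg hkl.ne, sum_ttEntry_tangentTerm_mul_of_lt hr0 hU δG δG' hG hkl]
  · rw [if_pos rfl, sum_ttEntry_tangentTerm_mul_self hr0 hrd hU hV]
  · rw [if_neg hlk.ne']
    exact (sum_congr rfl fun i _ => mul_comm _ _).trans
      (sum_ttEntry_tangentTerm_mul_of_lt hr0 hU δG' δG hG' hlk)

end TangentTerms

end TensorTrain

/-- Under the gauge conditions `(M^L(δG_k))ᵀ M^L(U_k) = 0` for `k = 1,…,d−1`,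
left-orthogonality of `U_k` (`k = 1,…,d−1`) and right-orthogonality of `V_k` (`k = 2,…,d`),
the inner product of two tangent vectors equals the sum of the Frobenius inner products of
their correction cores: `⟨v^(α), v^(β)⟩ = Σ_k ⟨δG_k^(α), δG_k^(β)⟩_F`. -/
theorem tangent_inner_eq_sum_frobenius {d n : ℕ} (r : Fin (d + 1) → ℕ)
    (hr0 : r 0 = 1) (hrd : r (Fin.last d) = 1)
    (U V : ∀ k : Fin d, Fin n → Matrix (Fin (r k.castSucc)) (Fin (r k.succ)) ℝ)
    (δGa δGb : ∀ k : Fin d, Fin n → Matrix (Fin (r k.castSucc)) (Fin (r k.succ)) ℝ)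
    -- left-orthogonality: `M^L(U_k)` has orthonormal columns for `k = 1,…,d−1`
    (hU : ∀ k : Fin d, (k : ℕ) + 1 < d → ∀ j j' : Fin (r k.succ),
      (∑ p : Fin (r k.castSucc), ∑ x : Fin n, U k x p j * U k x p j')
        = if j = j' then (1 : ℝ) else 0)
    -- right-orthogonality: `M^R(V_k)` has orthonormal rows for `k = 2,…,d`
    (hV : ∀ k : Fin d, 0 < (k : ℕ) → ∀ p p' : Fin (r k.castSucc),
      (∑ x : Fin n, ∑ q : Fin (r k.succ), V k x p q * V k x p' q)
        = if p = p' then (1 : ℝ) else 0)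
    -- gauge conditions for both families of correction cores, `k = 1,…,d−1`
    (hGa : ∀ k : Fin d, (k : ℕ) + 1 < d → ∀ j j' : Fin (r k.succ),
      (∑ p : Fin (r k.castSucc), ∑ x : Fin n, δGa k x p j * U k x p j') = 0)
    (hGb : ∀ k : Fin d, (k : ℕ) + 1 < d → ∀ j j' : Fin (r k.succ),
      (∑ p : Fin (r k.castSucc), ∑ x : Fin n, δGb k x p j * U k x p j') = 0) :
    (∑ i : Fin d → Fin n, tangentVec r U V δGa i * tangentVec r U V δGb i)
      = ∑ k : Fin d, ∑ x : Fin n, ∑ p : Fin (r k.castSucc), ∑ q : Fin (r k.succ),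
          δGa k x p q * δGb k x p q := by
  have hU' (k : Fin d) (hk : (k : ℕ) + 1 < d) : ∑ x, (U k x)ᵀ * U k x = 1 := by
    ext j j'
    rw [sum_transpose_mul_apply, hU k hk, Matrix.one_apply]
  have hV' (k : Fin d) (hk : 0 < (k : ℕ)) : ∑ x, V k x * (V k x)ᵀ = 1 := by
    ext p p'
    rw [sum_mul_transpose_apply, hV k hk, Matrix.one_apply]
  have hGa' (k : Fin d) (hk : (k : ℕ) + 1 < d) : ∑ x, (δGa k x)ᵀ * U k x = 0 := by
    ext j j'
    rw [sum_transpose_mul_apply, hGa k hk j j', Matrix.zero_apply]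
  have hGb' (k : Fin d) (hk : (k : ℕ) + 1 < d) : ∑ x, (δGb k x)ᵀ * U k x = 0 := by
    ext j j'
    rw [sum_transpose_mul_apply, hGb k hk j j', Matrix.zero_apply]
  calc ∑ i, tangentVec r U V δGa i * tangentVec r U V δGb i
      = ∑ k, ∑ l, ∑ i,
          ttEntry r (tangentTermCores U V δGa k) i * ttEntry r (tangentTermCores U V δGb l) i := by
        simp only [tangentVec, sum_mul_sum]
        rw [sum_comm]
        exact sum_congr rfl fun _ _ => sum_comm
    _ = _ := by
        simp only [sum_ttEntry_tangentTerm_mul hr0 hrd hU' hV' δGa δGb hGa' hGb', sum_ite_eq,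
          mem_univ, if_true]
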